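/- arXiv:1604.01215 — 2 statements merged into one kernel-verified Lean document; each statement's English description precedes it below -/
import Mathlib

section
/- Fix a real number ω > 0 and t₀ ∈ ℝ, and suppose β : (words over the alphabet ℤ) → ℂ satisfies the recursions: β_k(t₀) = 0 for each single letter k ≠ 0; β_0(t₀) = 1; β_{0^{r+1}}(t₀) = 0 for r ≥ 1; β_{0^r k}(t₀) = (i/(kω))·(β_{0^{r−1} k}(t₀) − β_{0^r}(t₀)·e^{ikωt₀}) for k ≠ 0, r ≥ 1; β_{k ℓ₁⋯ℓ_s}(t₀) = (i/(kω))·(e^{ikωt₀}·β_{ℓ₁⋯ℓ_s}(t₀) − β_{(k+ℓ₁) ℓ₂⋯ℓ_s}(t₀)) for k ≠ 0, s ≥ 1; and β_{0^r k ℓ₁⋯ℓ_s}(t₀) = (i/(kω))·(β_{0^{r−1} k ℓ₁⋯ℓ_s}(t₀) − β_{0^r (k+ℓ₁) ℓ₂⋯ℓ_s}(t₀)) for k ≠ 0, r ≥ 1, s ≥ 1. Then for every nonempty word w of n letters there exists a constant C ≥ 0, depending only on the word w, such that for all ω > 0 and all t₀ ∈ ℝ, |β_w(t₀)| ≤ C·ω^{−(n−1)}.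 -/
/-!
Each recursion writes `β_w` as `i / (kω)` times a difference of coefficients of words with one
letter fewer, one of them possibly multiplied by the unimodular factor `e^{ikωt₀}`. Since `k` is a
nonzero integer, `‖i / (kω)‖ ≤ 1 / ω`, so each step gains one power of `1 / ω` and adds the two
constants. Every nonempty word is `0^r` or `0^r k ℓ₁⋯ℓ_s` with `k ≠ 0`, and one of the recursions
(or the initial values) applies to it, so strong induction on the length gives the bound.
-/

open Complex

theorem List.exists_eq_replicate_append {α : Type*} (a : α) (w : List α) :
    ∃ r t, w = List.replicate r a ++ t ∧ ∀ b ∈ t.head?, b ≠ a := by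
  induction w with
  | nil => exact ⟨0, [], rfl, by simp⟩
  | cons b w ih =>
    by_cases hb : b = a
    · obtain ⟨r, t, rfl, ht⟩ := ih
      exact ⟨r + 1, t, by simp [hb, List.replicate_succ], ht⟩
    · exact ⟨0, b :: w, rfl, by simpa using hb⟩

theorem Complex.norm_I_div_intCast_mul_ofReal_le {k : ℤ} (hk : k ≠ 0) {ω : ℝ} (hω : 0 < ω) :
    ‖I / (k * ω)‖ ≤ ω⁻¹ := by
  have hk : (1 : ℝ) ≤ |(k : ℝ)| := by exact_mod_cast Int.one_le_abs hk
  rw [norm_div, norm_I, norm_mul, norm_intCast, norm_real, Real.norm_of_nonneg hω.le, one_div]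
  exact inv_anti₀ hω (le_mul_of_one_le_left hω.le hk)

def BoundedByInvPow {α : Type*} (f : ℝ → α → ℂ) (m : ℕ) : Prop :=
  ∃ C : ℝ, 0 ≤ C ∧ ∀ ω : ℝ, 0 < ω → ∀ t : α, ‖f ω t‖ ≤ C / ω ^ m

namespace BoundedByInvPow

variable {α : Type*} {f g : ℝ → α → ℂ} {m : ℕ}

theorem zero : BoundedByInvPow (fun _ (_ : α) => 0) m :=
  ⟨0, le_rfl, fun ω _ t => by simp⟩

theorem one : BoundedByInvPow (fun _ (_ : α) => 1) 0 :=
  ⟨1, zero_le_one, fun ω _ t => by simp⟩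

theorem congr (hf : BoundedByInvPow f m) (h : ∀ ω, 0 < ω → ∀ t, f ω t = g ω t) :
    BoundedByInvPow g m := by
  obtain ⟨C, hC, hf⟩ := hf
  exact ⟨C, hC, fun ω hω t => h ω hω t ▸ hf ω hω t⟩

theorem sub (hf : BoundedByInvPow f m) (hg : BoundedByInvPow g m) :
    BoundedByInvPow (fun ω t => f ω t - g ω t) m := by
  obtain ⟨C₁, hC₁, hf⟩ := hf
  obtain ⟨C₂, hC₂, hg⟩ := hg
  refine ⟨C₁ + C₂, add_nonneg hC₁ hC₂, fun ω hω t => ?_⟩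
  calc ‖f ω t - g ω t‖ ≤ ‖f ω t‖ + ‖g ω t‖ := norm_sub_le _ _
    _ ≤ C₁ / ω ^ m + C₂ / ω ^ m := add_le_add (hf ω hω t) (hg ω hω t)
    _ = (C₁ + C₂) / ω ^ m := (add_div _ _ _).symm

theorem mul_of_norm_le_one_right (hf : BoundedByInvPow f m) (hg : ∀ ω t, ‖g ω t‖ ≤ 1) :
    BoundedByInvPow (fun ω t => f ω t * g ω t) m := by
  obtain ⟨C, hC, hf⟩ := hf
  refine ⟨C, hC, fun ω hω t => ?_⟩
  rw [norm_mul]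
  exact (mul_le_of_le_one_right (norm_nonneg _) (hg ω t)).trans (hf ω hω t)

theorem mul_of_norm_le_one_left (hf : BoundedByInvPow f m) (hg : ∀ ω t, ‖g ω t‖ ≤ 1) :
    BoundedByInvPow (fun ω t => g ω t * f ω t) m :=
  (hf.mul_of_norm_le_one_right hg).congr fun _ _ _ => mul_comm _ _

theorem I_div_intCast_mul {k : ℤ} (hk : k ≠ 0) (hf : BoundedByInvPow f m) :
    BoundedByInvPow (fun ω t => I / (k * ω) * f ω t) (m + 1) := by
  obtain ⟨C, hC, hf⟩ := hf
  refine ⟨C, hC, fun ω hω t => ?_⟩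
  calc ‖I / (k * ω) * f ω t‖ = ‖I / (k * ω)‖ * ‖f ω t‖ := norm_mul _ _
    _ ≤ ω⁻¹ * (C / ω ^ m) :=
      mul_le_mul (norm_I_div_intCast_mul_ofReal_le hk hω) (hf ω hω t) (norm_nonneg _)
        (inv_nonneg.2 hω.le)
    _ = C / ω ^ (m + 1) := by ring

end BoundedByInvPow

/-- If the word-series coefficients `β = β(ω, t₀) : words over ℤ → ℂ` satisfy the
averaging recursions, then for each nonempty word `w` of `n` letters there is a
constant `C ≥ 0`, depending only on `w`, with `|β_w(t₀)| ≤ C·ω^{-(n-1)}` for all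
`ω > 0` and all `t₀`.  Words are lists of integers, with `0^r` encoded as
`List.replicate r 0`. -/
theorem stmt_6 (β : ℝ → ℝ → List ℤ → ℂ)
    (h₁ : ∀ ω : ℝ, 0 < ω → ∀ t₀ : ℝ, ∀ k : ℤ, k ≠ 0 → β ω t₀ [k] = 0)
    (h₂ : ∀ ω : ℝ, 0 < ω → ∀ t₀ : ℝ, β ω t₀ [0] = 1)
    (h₃ : ∀ ω : ℝ, 0 < ω → ∀ t₀ : ℝ, ∀ r : ℕ, 1 ≤ r →
      β ω t₀ (List.replicate (r + 1) 0) = 0)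
    (h₄ : ∀ ω : ℝ, 0 < ω → ∀ t₀ : ℝ, ∀ r : ℕ, 1 ≤ r → ∀ k : ℤ, k ≠ 0 →
      β ω t₀ (List.replicate r 0 ++ [k]) =
        (Complex.I / ((k : ℂ) * (ω : ℂ))) *
          (β ω t₀ (List.replicate (r - 1) 0 ++ [k]) -
            β ω t₀ (List.replicate r 0) *
              Complex.exp (Complex.I * (k : ℂ) * (ω : ℂ) * (t₀ : ℂ))))
    (h₅ : ∀ ω : ℝ, 0 < ω → ∀ t₀ : ℝ, ∀ k : ℤ, k ≠ 0 → ∀ ℓ : ℤ, ∀ rest : List ℤ,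
      β ω t₀ (k :: ℓ :: rest) =
        (Complex.I / ((k : ℂ) * (ω : ℂ))) *
          (Complex.exp (Complex.I * (k : ℂ) * (ω : ℂ) * (t₀ : ℂ)) *
              β ω t₀ (ℓ :: rest) -
            β ω t₀ ((k + ℓ) :: rest)))
    (h₆ : ∀ ω : ℝ, 0 < ω → ∀ t₀ : ℝ, ∀ r : ℕ, 1 ≤ r → ∀ k : ℤ, k ≠ 0 →
      ∀ ℓ : ℤ, ∀ rest : List ℤ,
      β ω t₀ (List.replicate r 0 ++ k :: ℓ :: rest) =
        (Complex.I / ((k : ℂ) * (ω : ℂ))) *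
          (β ω t₀ (List.replicate (r - 1) 0 ++ k :: ℓ :: rest) -
            β ω t₀ (List.replicate r 0 ++ (k + ℓ) :: rest))) :
    ∀ w : List ℤ, w ≠ [] → ∃ C : ℝ, 0 ≤ C ∧
      ∀ ω : ℝ, 0 < ω → ∀ t₀ : ℝ,
        ‖β ω t₀ w‖ ≤ C / ω ^ (w.length - 1) := by
  open BoundedByInvPow in
  suffices key : ∀ n (w : List ℤ), w.length = n + 1 → BoundedByInvPow (fun ω t₀ => β ω t₀ w) n by
    intro w hw
    obtain ⟨a, w, rfl⟩ := List.exists_cons_of_ne_nil hw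
    exact key _ _ rfl
  have hexp (k : ℤ) (ω t₀ : ℝ) : ‖exp (I * k * ω * t₀)‖ ≤ 1 := by
    simpa [mul_assoc] using (norm_exp_I_mul_ofReal (k * ω * t₀)).le
  intro n
  induction n using Nat.strong_induction_on with
  | _ n ih =>
  intro w hw
  obtain ⟨r, t, rfl, ht⟩ := List.exists_eq_replicate_append 0 w
  rcases t with _ | ⟨k, _ | ⟨ℓ, rest⟩⟩
  · rw [List.append_nil] at hw ⊢
    rcases r with _ | _ | r
    · simp at hw
    · obtain rfl : n = 0 := by simpa using hw
      exact one.congr fun ω hω t₀ => (h₂ ω hω t₀).symm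
    · exact zero.congr fun ω hω t₀ => (h₃ ω hω t₀ (r + 1) (by omega)).symm
  · have hk : k ≠ 0 := ht k rfl
    rcases r with _ | r
    · exact zero.congr fun ω hω t₀ => (h₁ ω hω t₀ k hk).symm
    · obtain rfl : n = r + 1 := by simp at hw; omega
      exact (((ih r (by omega) _ (by simp)).sub
        ((ih r (by omega) _ (by simp)).mul_of_norm_le_one_right (hexp k))).I_div_intCast_mul
          hk).congr fun ω hω t₀ => (h₄ ω hω t₀ (r + 1) (by omega) k hk).symm
  · have hk : k ≠ 0 := ht k rfl
    rcases r with _ | r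
    · obtain rfl : n = rest.length + 1 := by simp at hw; omega
      exact ((((ih _ (by omega) _ (by simp)).mul_of_norm_le_one_left (hexp k)).sub
        (ih _ (by omega) _ (by simp))).I_div_intCast_mul hk).congr
        fun ω hω t₀ => (h₅ ω hω t₀ k hk ℓ rest).symm
    · obtain rfl : n = r + rest.length + 2 := by simp at hw; omega
      exact (((ih _ (by omega) _ (by simp; omega)).sub
        (ih _ (by omega) _ (by simp; omega))).I_div_intCast_mul hk).congr
        fun ω hω t₀ => (h₆ ω hω t₀ (r + 1) (by omega) k hk ℓ rest).symm
end

section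
/- Let A, B, ν be real numbers and ω > 0. Define g₀, g₁, g₂, g₃, g₋₁, g₋₂, g₋₃ : ℝ² → ℂ² by g₀(φ,y) = (ν, y − (3/2)·B²·y − y³ + A·cos φ), g₁(φ,y) = (0, −(i/2)·B + (3i/8)·B³ + (3i/2)·B·y²), g₂(φ,y) = (0, (3/4)·B²·y), g₃(φ,y) = (0, −(i/8)·B³), and g₋ₖ = conjugate of gₖ; for a two-letter word k₁k₂ define g_{k₁k₂}(x) = g_{k₂}'(x)·g_{k₁}(x), where g_{k₂}'(x) is the Jacobian matrix of g_{k₂} at x. Then for all (φ, y) ∈ ℝ²: g₀(φ,y) + Σ_{k ∈ {±1,±2,±3}} (i/(kω))·( g_{k0}(φ,y) − g_{0k}(φ,y) − g_{k(−k)}(φ,y) ) = ( ν , y − (3/2)·B²·y − y³ + A·cos φ + (1/ω)·( B − (13/6)·B³ + B⁵ − (5/2)·B³·y² + 3·B·y⁴ + 6·A·B·y·cos φ ) ). -/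
open Complex

/-- The Fourier coefficient functions `gₖ : ℝ² → ℂ²` of the vibrational resonance
system, with `g₋ₖ` the complex conjugate of `gₖ` and `gₖ = 0` for `|k| > 3`. -/
noncomputable def vrCoeff (A B ν : ℝ) : ℤ → ℝ → ℝ → ℂ × ℂ := fun k φ y =>
  if k = 0 then ((ν : ℂ),
    ((y - (3 / 2) * B ^ 2 * y - y ^ 3 + A * Real.cos φ : ℝ) : ℂ))
  else if k = 1 then (0,
    -(Complex.I / 2) * (B : ℂ) + (3 * Complex.I / 8) * (B : ℂ) ^ 3
      + (3 * Complex.I / 2) * (B : ℂ) * (y : ℂ) ^ 2)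
  else if k = 2 then (0, (((3 / 4) * B ^ 2 * y : ℝ) : ℂ))
  else if k = 3 then (0, -(Complex.I / 8) * (B : ℂ) ^ 3)
  else if k = -1 then (0, starRingEnd ℂ
    (-(Complex.I / 2) * (B : ℂ) + (3 * Complex.I / 8) * (B : ℂ) ^ 3
      + (3 * Complex.I / 2) * (B : ℂ) * (y : ℂ) ^ 2))
  else if k = -2 then (0, starRingEnd ℂ (((3 / 4) * B ^ 2 * y : ℝ) : ℂ))
  else if k = -3 then (0, starRingEnd ℂ (-(Complex.I / 8) * (B : ℂ) ^ 3))
  else 0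

/-- The Jacobian matrix of `h : ℝ² → ℂ²` at the point `(φ, y)`, applied (as a
complex 2×2 matrix of partial derivatives) to the complex vector `v ∈ ℂ²`. -/
noncomputable def jacApply (h : ℝ → ℝ → ℂ × ℂ) (φ y : ℝ) (v : ℂ × ℂ) : ℂ × ℂ :=
  v.1 • deriv (fun s => h s y) φ + v.2 • deriv (fun s => h φ s) y

/-- The two-letter word basis function `g_{k₁k₂}(x) = g_{k₂}'(x)·g_{k₁}(x)`. -/
noncomputable def wordFun2 (A B ν : ℝ) (k₁ k₂ : ℤ) (φ y : ℝ) : ℂ × ℂ :=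
  jacApply (vrCoeff A B ν k₂) φ y (vrCoeff A B ν k₁ φ y)

/-!
Only `g₀` depends on `φ`, and `gₖ = (0, uₖ(y))` for `k ≠ 0`, so the bracket
`g_{k0} - g_{0k} - g_{k(-k)}` is `(0, uₖ ∂_y g₀ - g₀ ∂_y uₖ - uₖ ∂_y u₋ₖ)`. Since `u₋ₖ = conj uₖ`,
the real `u₂` makes the `k = ±2` terms cancel, while the purely imaginary `u₁`, `u₃` make the
`±1`, `±3` terms add up, the factor `i / (kω)` turning them real. What remains is polynomial
algebra with `i² = -1`.
-/

open ComplexConjugate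

theorem jacApply_of_fst_eq_zero (h : ℝ → ℝ → ℂ × ℂ) (φ y : ℝ) {v : ℂ × ℂ} (hv : v.1 = 0) :
    jacApply h φ y v = v.2 • deriv (fun s => h φ s) y := by
  simp [jacApply, hv]

section VibrationalResonance

variable (A B ν : ℝ)

theorem vrCoeff_zero_apply (φ y : ℝ) :
    vrCoeff A B ν 0 φ y =
      ((ν : ℂ), ((y - (3 / 2) * B ^ 2 * y - y ^ 3 + A * Real.cos φ : ℝ) : ℂ)) := by
  simp [vrCoeff]

theorem hasDerivAt_vrCoeff_zero_right (φ y : ℝ) :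
    HasDerivAt (fun s => vrCoeff A B ν 0 φ s)
      (0, ((1 - (3 / 2) * B ^ 2 - 3 * y ^ 2 : ℝ) : ℂ)) y := by
  rw [show vrCoeff A B ν 0 φ = _ from funext (vrCoeff_zero_apply A B ν φ)]
  have hpoly : HasDerivAt (fun s : ℝ => s - (3 / 2) * B ^ 2 * s - s ^ 3 + A * Real.cos φ)
      (1 - (3 / 2) * B ^ 2 - 3 * y ^ 2) y :=
    ((((hasDerivAt_id' y).sub ((hasDerivAt_id' y).const_mul ((3 / 2) * B ^ 2))).sub
      (hasDerivAt_pow 3 y)).add_const (A * Real.cos φ)).congr_deriv (by norm_num)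
  exact (hasDerivAt_const y _).prodMk hpoly.ofReal_comp

variable {A B ν}

theorem vrCoeff_eq_zero_of_three_lt_abs {k : ℤ} (hk : 3 < |k|) (φ y : ℝ) :
    vrCoeff A B ν k φ y = 0 := by
  have := lt_abs.mp hk
  simp (disch := omega) only [vrCoeff, if_neg]

theorem vrCoeff_neg_snd (k : ℤ) (φ y : ℝ) :
    (vrCoeff A B ν (-k) φ y).2 = conj (vrCoeff A B ν k φ y).2 := by
  rcases le_or_gt |k| 3 with hk | hk
  · obtain ⟨hl, hu⟩ := abs_le.mp hk
    interval_cases k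
    all_goals first
      | simp only [neg_zero, vrCoeff_zero_apply, Complex.conj_ofReal]
      | simp [vrCoeff]
  · rw [vrCoeff_eq_zero_of_three_lt_abs hk, vrCoeff_eq_zero_of_three_lt_abs (by rwa [abs_neg])]
    simp

theorem hasDerivAt_vrCoeff_neg_snd {k : ℤ} {φ y : ℝ} {d : ℂ}
    (hd : HasDerivAt (fun s => (vrCoeff A B ν k φ s).2) d y) :
    HasDerivAt (fun s => (vrCoeff A B ν (-k) φ s).2) (conj d) y := by
  simp only [vrCoeff_neg_snd]
  exact hd.star

theorem vrCoeff_fst_of_ne_zero {k : ℤ} (hk : k ≠ 0) (φ y : ℝ) :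
    (vrCoeff A B ν k φ y).1 = 0 := by
  unfold vrCoeff
  split_ifs <;> simp_all

theorem vrCoeff_apply_left_of_ne_zero {k : ℤ} (hk : k ≠ 0) (φ φ' y : ℝ) :
    vrCoeff A B ν k φ y = vrCoeff A B ν k φ' y := by
  simp [vrCoeff, hk]

theorem jacApply_vrCoeff_of_ne_zero {k : ℤ} (hk : k ≠ 0) (φ y : ℝ) (v : ℂ × ℂ) :
    jacApply (vrCoeff A B ν k) φ y v = v.2 • deriv (fun s => vrCoeff A B ν k φ s) y := by
  have hconst : (fun s => vrCoeff A B ν k s y) = fun _ => vrCoeff A B ν k φ y :=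
    funext fun s => vrCoeff_apply_left_of_ne_zero hk s φ y
  simp [jacApply, hconst]

theorem hasDerivAt_vrCoeff_of_ne_zero {k : ℤ} (hk : k ≠ 0) {φ y : ℝ} {d : ℂ}
    (hd : HasDerivAt (fun s => (vrCoeff A B ν k φ s).2) d y) :
    HasDerivAt (fun s => vrCoeff A B ν k φ s) (0, d) y := by
  have hfun : (fun s => vrCoeff A B ν k φ s) = fun s => (0, (vrCoeff A B ν k φ s).2) :=
    funext fun s => Prod.ext (vrCoeff_fst_of_ne_zero hk φ s) rfl
  rw [hfun]
  exact (hasDerivAt_const y 0).prodMk hd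

theorem wordFun2_bracket_of_ne_zero {k : ℤ} (hk : k ≠ 0) {φ y : ℝ} {d : ℂ}
    (hd : HasDerivAt (fun s => (vrCoeff A B ν k φ s).2) d y) :
    wordFun2 A B ν k 0 φ y - wordFun2 A B ν 0 k φ y - wordFun2 A B ν k (-k) φ y =
      (0, (vrCoeff A B ν k φ y).2 * ((1 - (3 / 2) * B ^ 2 - 3 * y ^ 2 : ℝ) : ℂ)
        - (vrCoeff A B ν 0 φ y).2 * d - (vrCoeff A B ν k φ y).2 * conj d) := by
  have hv := vrCoeff_fst_of_ne_zero (A := A) (B := B) (ν := ν) hk φ y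
  simp only [wordFun2, jacApply_of_fst_eq_zero _ _ _ hv, jacApply_vrCoeff_of_ne_zero hk,
    (hasDerivAt_vrCoeff_zero_right A B ν φ y).deriv, (hasDerivAt_vrCoeff_of_ne_zero hk hd).deriv,
    (hasDerivAt_vrCoeff_of_ne_zero (neg_ne_zero.mpr hk) (hasDerivAt_vrCoeff_neg_snd hd)).deriv]
  ext <;> simp

variable (A B ν)

theorem vrCoeff_one_snd (φ y : ℝ) :
    (vrCoeff A B ν 1 φ y).2 = I * ((-(B / 2) + 3 / 8 * B ^ 3 + 3 / 2 * B * y ^ 2 : ℝ) : ℂ) := by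
  simp [vrCoeff]
  ring

theorem vrCoeff_two_snd (φ y : ℝ) :
    (vrCoeff A B ν 2 φ y).2 = ((3 / 4 * B ^ 2 * y : ℝ) : ℂ) := by
  simp only [vrCoeff]
  norm_num

theorem vrCoeff_three_snd (φ y : ℝ) :
    (vrCoeff A B ν 3 φ y).2 = I * ((-(B ^ 3 / 8) : ℝ) : ℂ) := by
  simp [vrCoeff]
  ring

theorem hasDerivAt_vrCoeff_one_snd (φ y : ℝ) :
    HasDerivAt (fun s => (vrCoeff A B ν 1 φ s).2) (I * ((3 * B * y : ℝ) : ℂ)) y := by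
  simp only [vrCoeff_one_snd]
  have hpoly : HasDerivAt (fun s : ℝ => -(B / 2) + 3 / 8 * B ^ 3 + 3 / 2 * B * s ^ 2)
      (3 * B * y) y :=
    (((hasDerivAt_pow 2 y).const_mul (3 / 2 * B)).const_add _).congr_deriv (by ring)
  exact hpoly.ofReal_comp.const_mul I

theorem hasDerivAt_vrCoeff_two_snd (φ y : ℝ) :
    HasDerivAt (fun s => (vrCoeff A B ν 2 φ s).2) ((3 / 4 * B ^ 2 : ℝ) : ℂ) y := by
  simp only [vrCoeff_two_snd]
  exact ((hasDerivAt_id' y).const_mul (3 / 4 * B ^ 2)).ofReal_comp.congr_deriv (by simp)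

theorem hasDerivAt_vrCoeff_three_snd (φ y : ℝ) :
    HasDerivAt (fun s => (vrCoeff A B ν 3 φ s).2) 0 y := by
  simp only [vrCoeff_three_snd]
  exact hasDerivAt_const y _

end VibrationalResonance

theorem stmt_7_general (A B ν ω : ℝ) :
    ∀ φ y : ℝ,
      vrCoeff A B ν 0 φ y +
        ∑ k ∈ ({1, -1, 2, -2, 3, -3} : Finset ℤ),
          (Complex.I / ((k : ℂ) * (ω : ℂ))) •
            (wordFun2 A B ν k 0 φ y - wordFun2 A B ν 0 k φ y
              - wordFun2 A B ν k (-k) φ y) =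
      ((ν : ℂ),
        ((y - (3 / 2) * B ^ 2 * y - y ^ 3 + A * Real.cos φ
          + (1 / ω) * (B - (13 / 6) * B ^ 3 + B ^ 5 - (5 / 2) * B ^ 3 * y ^ 2
            + 3 * B * y ^ 4 + 6 * A * B * y * Real.cos φ) : ℝ) : ℂ)) := by
  intro φ y
  have h₁ := hasDerivAt_vrCoeff_one_snd A B ν φ y
  have h₂ := hasDerivAt_vrCoeff_two_snd A B ν φ y
  have h₃ := hasDerivAt_vrCoeff_three_snd A B ν φ y
  rw [Finset.sum_insert (by decide), Finset.sum_insert (by decide), Finset.sum_insert (by decide),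
    Finset.sum_insert (by decide), Finset.sum_insert (by decide), Finset.sum_singleton,
    wordFun2_bracket_of_ne_zero one_ne_zero h₁,
    wordFun2_bracket_of_ne_zero (by norm_num) (hasDerivAt_vrCoeff_neg_snd h₁),
    wordFun2_bracket_of_ne_zero two_ne_zero h₂,
    wordFun2_bracket_of_ne_zero (by norm_num) (hasDerivAt_vrCoeff_neg_snd h₂),
    wordFun2_bracket_of_ne_zero three_ne_zero h₃,
    wordFun2_bracket_of_ne_zero (by norm_num) (hasDerivAt_vrCoeff_neg_snd h₃)]
  simp only [vrCoeff_neg_snd, vrCoeff_zero_apply, vrCoeff_one_snd, vrCoeff_two_snd,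
    vrCoeff_three_snd, map_mul, map_neg, map_zero, Complex.conj_I, Complex.conj_ofReal]
  refine Prod.ext (by simp) ?_
  simp only [Prod.snd_add, Prod.smul_snd, smul_eq_mul]
  push_cast
  ring_nf
  rw [I_sq]
  ring

/-- The averaged system truncated after two-letter words:
`g₀ + ∑_{k∈{±1,±2,±3}} (i/(kω))(g_{k0} - g_{0k} - g_{k(-k)})` equals the
right-hand side of the second-order averaged vibrational resonance equation. -/
theorem stmt_7 (A B ν ω : ℝ) (hω : 0 < ω) :
    ∀ φ y : ℝ,
      vrCoeff A B ν 0 φ y +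
        ∑ k ∈ ({1, -1, 2, -2, 3, -3} : Finset ℤ),
          (Complex.I / ((k : ℂ) * (ω : ℂ))) •
            (wordFun2 A B ν k 0 φ y - wordFun2 A B ν 0 k φ y
              - wordFun2 A B ν k (-k) φ y) =
      ((ν : ℂ),
        ((y - (3 / 2) * B ^ 2 * y - y ^ 3 + A * Real.cos φ
          + (1 / ω) * (B - (13 / 6) * B ^ 3 + B ^ 5 - (5 / 2) * B ^ 3 * y ^ 2
            + 3 * B * y ^ 4 + 6 * A * B * y * Real.cos φ) : ℝ) : ℂ)) :=
  stmt_7_general A B ν ω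
end
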